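/- arXiv:1901.09718 — 5 statements merged into one kernel-verified Lean document; each statement's English description precedes it below -/
import Mathlib

section
/- Let (x̄,ū) be a W^{1,1} local minimizer for (FP3) and let [τ1,τ2] ⊆ [t0,T] with τ1 < τ2 be such that −1 < x̄(t) < 1 for all t ∈ (τ1,τ2). If x̄(τ1) = 1 and x̄(τ2) = −1, then τ2 − τ1 = 2/a and x̄(t) = 1 − a(t − τ1) for all t ∈ [τ1,τ2]. -/
open MeasureTheory Set

noncomputable section

/-- A feasible process for problem (FP3): `x` is the (absolutely continuous) state
trajectory, represented as the indefinite integral of its a.e. derivative `-a*u`,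
`u` is a measurable control with values in `[-1,1]` a.e., the initial condition is
`x t0 = x0`, and the bilateral state constraint `-1 ≤ x t ≤ 1` holds on `[t0,T]`. -/
def FP3Feasible (a t0 T x0 : ℝ) (x u : ℝ → ℝ) : Prop :=
  AEStronglyMeasurable u (volume.restrict (Icc t0 T)) ∧
  (∀ᵐ t ∂(volume.restrict (Icc t0 T)), u t ∈ Icc (-1 : ℝ) 1) ∧
  (∀ t ∈ Icc t0 T, x t = x0 + ∫ s in t0..t, -(a * u s)) ∧
  (∀ t ∈ Icc t0 T, x t ∈ Icc (-1 : ℝ) 1)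

/-- The cost functional of (FP3) on the interval `[t1,t2]`. -/
def FP3Cost (lam t1 t2 : ℝ) (x u : ℝ → ℝ) : ℝ :=
  ∫ t in t1..t2, -(Real.exp (-(lam * t)) * (x t + u t))

/-- `(x,u)` is a `W^{1,1}` local minimizer of (FP3). -/
def FP3LocalMin (a lam t0 T x0 : ℝ) (x u : ℝ → ℝ) : Prop :=
  FP3Feasible a t0 T x0 x u ∧
  ∃ δ > (0 : ℝ), ∀ y v, FP3Feasible a t0 T x0 y v →
    (∫ t in t0..T, |(-(a * v t)) - (-(a * u t))|) ≤ δ →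
    FP3Cost lam t0 T x u ≤ FP3Cost lam t0 T y v

/-- `(x,u)` is a `W^{1,1}` global minimizer of (FP3). -/
def FP3GlobalMin (a lam t0 T x0 : ℝ) (x u : ℝ → ℝ) : Prop :=
  FP3Feasible a t0 T x0 x u ∧
  ∀ y v, FP3Feasible a t0 T x0 y v → FP3Cost lam t0 T x u ≤ FP3Cost lam t0 T y v

/-- The function `Δ(t1,t2) = e^{-λ t1} - 2 e^{-λ (t1+t2)/2} + e^{-λ t2}`. -/
def FP3Delta (lam t1 t2 : ℝ) : ℝ :=
  Real.exp (-(lam * t1)) - 2 * Real.exp (-(lam * (t1 + t2) / 2)) + Real.exp (-(lam * t2))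

/-- The characteristic constant `ρ = (1/λ) ln (a/(a-λ))` of (FP3). -/
def FP3rho (a lam : ℝ) : ℝ := (1 / lam) * Real.log (a / (a - lam))

open Real Filter Topology

/-!
On `(τ1, τ2)` the control must be `1` almost everywhere. Otherwise there is a time `c` with a
set `F` before `c` where `u > 0` and a set `G` after `c` where `u ≤ 1 - ε`, both of positive
measure and inside a compact subinterval where `x̄` stays a fixed distance below `1`. Moving a
small amount of control mass from `F` to `G` raises the state by at most that amount and only
there, so the perturbed process is feasible and `W^{1,1}`-close. For a perturbation `g` of the
control with zero mean, integration by parts gives the cost change `(a/λ - 1) ∫ e^{-λt} g`, and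
`∫ e^{-λt} g < 0` because `g ≤ 0` before `c` and `g ≥ 0` after it. As `a > λ` the cost drops,
contradicting local minimality. Hence `x̄' = -a` on `[τ1, τ2]`, and `x̄(τ2) = -1` gives
`τ2 - τ1 = 2/a`.
-/

theorem exists_measure_setOf_le_sub_ne_zero {α : Type*} [MeasurableSpace α] {μ : Measure α}
    {f : α → ℝ} {b : ℝ} {s : Set α} (h : μ ({x | f x < b} ∩ s) ≠ 0) :
    ∃ ε > 0, μ ({x | f x ≤ b - ε} ∩ s) ≠ 0 := by
  by_contra! hnull
  refine h (measure_mono_null (t := ⋃ n : ℕ, {x | f x ≤ b - 1 / (n + 1)} ∩ s) ?_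
    (measure_iUnion_null fun n => hnull _ Nat.one_div_pos_of_nat))
  rintro x ⟨hx, hxs⟩
  obtain ⟨n, hn⟩ := exists_nat_one_div_lt (sub_pos.2 (mem_ofPred_eq ▸ hx))
  exact mem_iUnion.2 ⟨n, by simp only [mem_ofPred_eq]; linarith, hxs⟩

theorem exists_measure_inter_Ioo_ne_zero {μ : Measure ℝ} {s : Set ℝ} {p q : ℝ}
    (h : μ (s ∩ Ioo p q) ≠ 0) :
    ∃ p' q', p < p' ∧ p' < q' ∧ q' < q ∧ μ (s ∩ Ioo p' q') ≠ 0 := by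
  have hcover : s ∩ Ioo p q ⊆ ⋃ n : ℕ, s ∩ Ioo (p + 1 / (n + 1)) (q - 1 / (n + 1)) := by
    rintro t ⟨hts, htp, htq⟩
    obtain ⟨n, hn⟩ := exists_nat_one_div_lt (lt_min (sub_pos.2 htp) (sub_pos.2 htq))
    exact mem_iUnion.2 ⟨n, hts, by linarith [min_le_left (t - p) (q - t)],
      by linarith [min_le_right (t - p) (q - t)]⟩
  obtain ⟨n, hn⟩ : ∃ n : ℕ, μ (s ∩ Ioo (p + 1 / (n + 1)) (q - 1 / (n + 1))) ≠ 0 := by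
    by_contra! hnull
    exact h (measure_mono_null hcover (measure_iUnion_null hnull))
  obtain ⟨t, -, ht⟩ := nonempty_of_measure_ne_zero hn
  have hpos : (0 : ℝ) < 1 / (n + 1) := Nat.one_div_pos_of_nat
  exact ⟨_, _, by linarith, ht.1.trans ht.2, by linarith, hn⟩

theorem IsCompact.exists_pos_forall_le_sub {α : Type*} [TopologicalSpace α] {K : Set α}
    {f : α → ℝ} {b : ℝ} (hK : IsCompact K) (hf : ContinuousOn f K) (hlt : ∀ t ∈ K, f t < b) :
    ∃ η > 0, ∀ t ∈ K, f t ≤ b - η := by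
  rcases K.eq_empty_or_nonempty with rfl | hne
  · exact ⟨1, one_pos, by simp⟩
  obtain ⟨t, htK, hmax⟩ := hK.exists_isMaxOn hne hf
  exact ⟨b - f t, sub_pos.2 (hlt t htK), fun s hs => by linarith [isMaxOn_iff.1 hmax s hs]⟩

theorem measureReal_inter_Ioo_pos {s : Set ℝ} {p q : ℝ} (h : volume (s ∩ Ioo p q) ≠ 0) :
    0 < volume.real (s ∩ Ioo p q) :=
  ENNReal.toReal_pos h ((measure_mono inter_subset_right).trans_lt measure_Ioo_lt_top).ne

theorem measure_setOf_pos_inter_Ioo_ne_zero {f : ℝ → ℝ} {p q : ℝ} (hpq : p ≤ q)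
    (h : 0 < ∫ t in p..q, f t) : volume ({t | 0 < f t} ∩ Ioo p q) ≠ 0 := by
  intro hnull
  have hnonpos : f ≤ᵐ[volume.restrict (Ioo p q)] 0 := by
    rw [Filter.EventuallyLE, ae_restrict_iff' measurableSet_Ioo]
    refine measure_mono_null (fun t ht => ?_) hnull
    simp only [mem_compl_iff, mem_ofPred_eq, Classical.not_imp, Pi.zero_apply, not_le] at ht
    exact ⟨ht.2, ht.1⟩
  rw [intervalIntegral.integral_of_le hpq, integral_Ioc_eq_integral_Ioo] at h
  exact h.not_ge (integral_nonpos_of_ae hnonpos)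

theorem integral_exp_mul_primitive {g : ℝ → ℝ} {p q lam : ℝ}
    (hg : IntervalIntegrable g volume p q) (hlam : lam ≠ 0) :
    ∫ t in p..q, exp (-(lam * t)) * ∫ s in p..t, g s
      = ((∫ t in p..q, exp (-(lam * t)) * g t) - exp (-(lam * q)) * ∫ t in p..q, g t) / lam := by
  set E : ℝ → ℝ := fun t => -exp (-(lam * t)) / lam
  have hE : ∀ t, deriv E t = exp (-(lam * t)) := fun t => by
    have := (((hasDerivAt_id t).const_mul lam).neg.exp.neg.div_const lam).deriv
    simp only [id, mul_one, Pi.neg_apply] at this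
    rw [this]
    field_simp
  have hEac : AbsolutelyContinuousOnInterval E p q :=
    ContDiffOn.absolutelyContinuousOnInterval (by fun_prop)
  have ibp := (hg.absolutelyContinuousOnInterval_intervalIntegral
    left_mem_uIcc).integral_mul_deriv_eq_deriv_mul hEac
  have hderiv : ∫ t in p..q, deriv (fun t => ∫ s in p..t, g s) t * E t
      = -(∫ t in p..q, exp (-(lam * t)) * g t) / lam := by
    rw [neg_div, ← intervalIntegral.integral_div, ← intervalIntegral.integral_neg]
    refine intervalIntegral.integral_congr_ae ?_
    filter_upwards [hg.ae_hasDerivAt_integral] with t ht htI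
    rw [(ht (uIoc_subset_uIcc htI) p left_mem_uIcc).deriv]
    ring
  simp only [hE, intervalIntegral.integral_same, zero_mul, sub_zero, hderiv, E] at ibp
  rw [intervalIntegral.integral_congr fun t _ => mul_comm _ _, ibp]
  ring

theorem integral_nonpos_of_sign_change {g : ℝ → ℝ} {p q c t : ℝ}
    (hg : IntervalIntegrable g volume p q) (hzero : ∫ s in p..q, g s = 0)
    (hleft : ∀ s ≤ c, g s ≤ 0) (hright : ∀ s, c < s → 0 ≤ g s) (ht : t ∈ Icc p q) :
    ∫ s in p..t, g s ≤ 0 := by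
  rcases le_or_gt t c with htc | hct
  · have := intervalIntegral.integral_nonneg (μ := volume) ht.1
      (fun s hs => neg_nonneg.2 (hleft s (hs.2.trans htc)))
    rw [intervalIntegral.integral_neg] at this
    linarith
  · have htq : 0 ≤ ∫ s in t..q, g s :=
      intervalIntegral.integral_nonneg ht.2 fun s hs => hright s (hct.trans_le hs.1)
    rw [← intervalIntegral.integral_interval_sub_left hg
      (hg.mono_set (uIcc_subset_uIcc_left (mem_uIcc_of_le ht.1 ht.2))), hzero] at htq
    linarith

theorem integral_exp_mul_neg_of_sign_change {g : ℝ → ℝ} {p q c lam : ℝ} (hlam : 0 < lam)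
    (hg : IntervalIntegrable g volume p q) (hzero : ∫ t in p..q, g t = 0)
    (hleft : ∀ t ≤ c, g t ≤ 0) (hright : ∀ t, c < t → 0 ≤ g t)
    (hpos : volume ({t | 0 < g t} ∩ Ioc p q) ≠ 0) :
    ∫ t in p..q, exp (-(lam * t)) * g t < 0 := by
  -- subtracting `exp (-(lam * c))` times the zero mean makes the integrand of one sign
  set w : ℝ → ℝ := fun t => exp (-(lam * c)) - exp (-(lam * t))
  have hw : ∀ t, 0 < w t ↔ c < t := fun t => by
    rw [sub_pos, exp_lt_exp, neg_lt_neg_iff, mul_lt_mul_iff_right₀ hlam]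
  have hnonneg : ∀ t, 0 ≤ w t * g t := fun t => by
    rcases le_or_gt t c with htc | hct
    · exact mul_nonneg_of_nonpos_of_nonpos (not_lt.1 ((hw t).not.2 htc.not_gt)) (hleft t htc)
    · exact mul_nonneg ((hw t).2 hct).le (hright t hct)
  have hwg : IntervalIntegrable (fun t => w t * g t) volume p q :=
    hg.continuousOn_mul (g := w) (by fun_prop)
  have hsupp : {t | 0 < g t} ⊆ Function.support fun t => w t * g t := fun t ht =>
    (mul_pos ((hw t).2 (lt_of_not_ge fun htc => (hleft t htc).not_gt ht)) ht).ne'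
  have hpos' : 0 < ∫ t in p..q, w t * g t := by
    rw [intervalIntegral.integral_pos_iff_support_of_nonneg_ae (ae_of_all _ hnonneg) hwg]
    obtain ⟨t, -, htI⟩ := nonempty_of_measure_ne_zero hpos
    exact ⟨htI.1.trans_le htI.2, (pos_iff_ne_zero.2 hpos).trans_le
      (measure_mono (inter_subset_inter_left _ hsupp))⟩
  have hsplit : ∫ t in p..q, w t * g t = -∫ t in p..q, exp (-(lam * t)) * g t := by
    simp only [w, sub_mul]
    rw [intervalIntegral.integral_sub (hg.const_mul _) (hg.continuousOn_mul (by fun_prop)),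
      intervalIntegral.integral_const_mul, hzero]
    ring
  linarith

theorem sub_mul_integral_mem_Icc_of_sign_change {x g : ℝ → ℝ} {a η t0 T p c q t : ℝ}
    (ha : 0 ≤ a) (hg : IntervalIntegrable g volume t0 T) (hmean : ∫ s in t0..T, g s = 0)
    (hleft : ∀ s ≤ c, g s ≤ 0) (hright : ∀ s, c < s → 0 ≤ g s) (hsupp : ∀ s ∉ Ioo p q, g s = 0)
    (hsmall : a * ∫ s in t0..T, |g s| ≤ η) (hx : ∀ s ∈ Icc t0 T, x s ∈ Icc (-1 : ℝ) 1)
    (hxη : ∀ s ∈ Icc p q, x s ≤ 1 - η) (ht : t ∈ Icc t0 T) :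
    x t - a * ∫ s in t0..t, g s ∈ Icc (-1 : ℝ) 1 := by
  have hΓ := integral_nonpos_of_sign_change hg hmean hleft hright ht
  refine ⟨by nlinarith [(hx t ht).1], ?_⟩
  rcases lt_or_ge t p with htp | hpt
  · have hzero : ∫ s in t0..t, g s = 0 := by
      rw [intervalIntegral.integral_congr (g := fun _ => 0) fun s hs => ?_,
        intervalIntegral.integral_zero]
      rw [uIcc_of_le ht.1] at hs
      exact hsupp s fun hs' => (hs.2.trans_lt htp).not_gt hs'.1
    rw [hzero, mul_zero, sub_zero]
    exact (hx t ht).2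
  rcases le_or_gt t q with htq | hqt
  · have hbound : |∫ s in t0..t, g s| ≤ ∫ s in t0..T, |g s| :=
      (intervalIntegral.abs_integral_le_integral_abs ht.1).trans
        (intervalIntegral.integral_mono_interval le_rfl ht.1 ht.2
          (ae_of_all _ fun s => abs_nonneg (g s)) hg.abs)
    nlinarith [abs_le.1 hbound, hxη t ⟨hpt, htq⟩]
  · have htail : ∫ s in t..T, g s = 0 := by
      rw [intervalIntegral.integral_congr (g := fun _ => 0) fun s hs => ?_,
        intervalIntegral.integral_zero]
      rw [uIcc_of_le ht.2] at hs
      exact hsupp s fun hs' => (hqt.trans_le hs.1).not_gt hs'.2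
    have hI : uIcc t0 t ⊆ uIcc t0 T := uIcc_subset_uIcc_left (mem_uIcc_of_le ht.1 ht.2)
    have hsplit := intervalIntegral.integral_interval_sub_left hg (hg.mono_set hI)
    rw [hmean, htail, zero_sub, neg_eq_zero] at hsplit
    rw [hsplit, mul_zero, sub_zero]
    exact (hx t ht).2

theorem intervalIntegrable_of_ae_mem_Icc {f : ℝ → ℝ} {p q : ℝ} (hpq : p ≤ q)
    (hf : AEStronglyMeasurable f (volume.restrict (Icc p q)))
    (hb : ∀ᵐ t ∂volume.restrict (Icc p q), f t ∈ Icc (-1 : ℝ) 1) :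
    IntervalIntegrable f volume p q := by
  have hsub : uIoc p q ⊆ Icc p q := by rw [uIoc_of_le hpq]; exact Ioc_subset_Icc_self
  refine (intervalIntegrable_const (c := (1 : ℝ))).mono_fun
    (hf.mono_measure (Measure.restrict_mono hsub le_rfl)) ?_
  filter_upwards [ae_restrict_of_ae_restrict_of_subset hsub hb] with t ht
  simpa [Real.norm_eq_abs, abs_le] using ht

namespace FP3Feasible

variable {a t0 T x0 : ℝ} {x u : ℝ → ℝ}

theorem intervalIntegrable (h : FP3Feasible a t0 T x0 x u) (htT : t0 ≤ T) :
    IntervalIntegrable u volume t0 T :=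
  intervalIntegrable_of_ae_mem_Icc htT h.1 h.2.1

theorem exists_measurable_control (h : FP3Feasible a t0 T x0 x u) :
    ∃ U : ℝ → ℝ, Measurable U ∧ (∀ t, U t ∈ Icc (-1 : ℝ) 1) ∧
      U =ᵐ[volume.restrict (Icc t0 T)] u := by
  refine ⟨fun t => max (-1) (min 1 (h.1.mk u t)),
    measurable_const.max (measurable_const.min h.1.stronglyMeasurable_mk.measurable),
    fun t => ⟨le_max_left _ _, max_le (by norm_num) (min_le_left _ _)⟩, ?_⟩
  filter_upwards [h.1.ae_eq_mk, h.2.1] with t hmk hu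
  rw [← hmk, min_eq_right hu.2, max_eq_right hu.1]

theorem sub_eq_integral (h : FP3Feasible a t0 T x0 x u) {p q : ℝ} (hp : p ∈ Icc t0 T)
    (hq : q ∈ Icc t0 T) : x q - x p = -(a * ∫ s in p..q, u s) := by
  have hu : IntervalIntegrable (fun s => -(a * u s)) volume t0 T :=
    ((h.intervalIntegrable (hp.1.trans hp.2)).const_mul a).neg
  rw [h.2.2.1 p hp, h.2.2.1 q hq, add_sub_add_left_eq_sub,
    intervalIntegral.integral_interval_sub_left
      (hu.mono_set (uIcc_subset_uIcc_left (mem_uIcc_of_le hq.1 hq.2)))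
      (hu.mono_set (uIcc_subset_uIcc_left (mem_uIcc_of_le hp.1 hp.2))),
    intervalIntegral.integral_neg, intervalIntegral.integral_const_mul]

theorem continuousOn (h : FP3Feasible a t0 T x0 x u) : ContinuousOn x (Icc t0 T) := by
  rcases le_or_gt t0 T with htT | hTt
  · have hu : IntervalIntegrable (fun s => -(a * u s)) volume t0 T :=
      ((h.intervalIntegrable htT).const_mul a).neg
    have := intervalIntegral.continuousOn_primitive_interval' hu left_mem_uIcc
    rw [uIcc_of_le htT] at this
    exact (continuousOn_const.add this).congr h.2.2.1
  · simp [Icc_eq_empty_of_lt hTt]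

theorem intervalIntegrable_cost (h : FP3Feasible a t0 T x0 x u) (htT : t0 ≤ T) (lam : ℝ) :
    IntervalIntegrable (fun t => -(exp (-(lam * t)) * (x t + u t))) volume t0 T :=
  ((((h.continuousOn.mono (by rw [uIcc_of_le htT])).intervalIntegrable).add
    (h.intervalIntegrable htT)).continuousOn_mul (g := fun t => exp (-(lam * t)))
    (by fun_prop)).neg

end FP3Feasible

theorem FP3Cost_sub_FP3Cost {a lam t0 T x0 : ℝ} {x u y v : ℝ → ℝ} (htT : t0 ≤ T)
    (hlam : lam ≠ 0) (hxu : FP3Feasible a t0 T x0 x u) (hyv : FP3Feasible a t0 T x0 y v)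
    (hmean : ∫ t in t0..T, (v t - u t) = 0) :
    FP3Cost lam t0 T y v - FP3Cost lam t0 T x u
      = (a / lam - 1) * ∫ t in t0..T, exp (-(lam * t)) * (v t - u t) := by
  have hu := hxu.intervalIntegrable htT
  have hv := hyv.intervalIntegrable htT
  have hg := hv.sub hu
  have hneg : ∀ {w : ℝ → ℝ}, IntervalIntegrable w volume t0 T → ∀ {t}, t ∈ Icc t0 T →
      IntervalIntegrable (fun s => -(a * w s)) volume t0 t := fun hw t ht =>
    ((hw.mono_set (uIcc_subset_uIcc_left (mem_uIcc_of_le ht.1 ht.2))).const_mul a).neg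
  have hstate : ∀ t ∈ uIcc t0 T, y t - x t = -(a * ∫ s in t0..t, (v s - u s)) := by
    intro t ht
    rw [uIcc_of_le htT] at ht
    rw [hyv.2.2.1 t ht, hxu.2.2.1 t ht, add_sub_add_left_eq_sub,
      ← intervalIntegral.integral_sub (hneg hv ht) (hneg hu ht),
      ← intervalIntegral.integral_const_mul, ← intervalIntegral.integral_neg]
    congr 1 with s
    ring
  have hprim : IntervalIntegrable (fun t => exp (-(lam * t)) * ∫ s in t0..t, (v s - u s))
      volume t0 T := (ContinuousOn.mul (by fun_prop)
        (intervalIntegral.continuousOn_primitive_interval' hg left_mem_uIcc)).intervalIntegrable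
  calc FP3Cost lam t0 T y v - FP3Cost lam t0 T x u
      = ∫ t in t0..T, (a * (exp (-(lam * t)) * ∫ s in t0..t, (v s - u s))
          - exp (-(lam * t)) * (v t - u t)) := by
        rw [FP3Cost, FP3Cost, ← intervalIntegral.integral_sub
          (hyv.intervalIntegrable_cost htT lam) (hxu.intervalIntegrable_cost htT lam)]
        refine intervalIntegral.integral_congr fun t ht => ?_
        linear_combination -exp (-(lam * t)) * hstate t ht
    _ = a * ((∫ t in t0..T, exp (-(lam * t)) * (v t - u t)) / lam)
          - ∫ t in t0..T, exp (-(lam * t)) * (v t - u t) := by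
        rw [intervalIntegral.integral_sub (hprim.const_mul a) (hg.continuousOn_mul (by fun_prop)),
          intervalIntegral.integral_const_mul, integral_exp_mul_primitive hg hlam, hmean]
        ring
    _ = _ := by ring

theorem FP3LocalMin.exists_integral_exp_mul_nonneg {a lam t0 T x0 : ℝ} {x u : ℝ → ℝ}
    (hmin : FP3LocalMin a lam t0 T x0 x u) (hlam : 0 < lam) (hal : lam < a) (htT : t0 ≤ T) :
    ∃ δ > 0, ∀ g : ℝ → ℝ, AEStronglyMeasurable g (volume.restrict (Icc t0 T)) →
      (∀ᵐ t ∂volume.restrict (Icc t0 T), u t + g t ∈ Icc (-1 : ℝ) 1) →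
      (∀ t ∈ Icc t0 T, x t - a * ∫ s in t0..t, g s ∈ Icc (-1 : ℝ) 1) →
      ∫ t in t0..T, g t = 0 → ∫ t in t0..T, |g t| ≤ δ →
      0 ≤ ∫ t in t0..T, exp (-(lam * t)) * g t := by
  obtain ⟨hxu, δ, hδ, hopt⟩ := hmin
  have ha : 0 < a := hlam.trans hal
  refine ⟨δ / a, div_pos hδ ha, fun g hgm hbound hstate hmean hsmall => ?_⟩
  set v : ℝ → ℝ := fun t => u t + g t
  set y : ℝ → ℝ := fun t => x0 + ∫ s in t0..t, -(a * v s)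
  have hg : IntervalIntegrable g volume t0 T := by
    simpa [v] using (intervalIntegrable_of_ae_mem_Icc htT (hxu.1.add hgm) hbound).sub
      (hxu.intervalIntegrable htT)
  have hyv : FP3Feasible a t0 T x0 y v := by
    refine ⟨hxu.1.add hgm, hbound, fun _ _ => rfl, fun t ht => ?_⟩
    have hI : uIcc t0 t ⊆ uIcc t0 T := uIcc_subset_uIcc_left (mem_uIcc_of_le ht.1 ht.2)
    have hy : y t = x t - a * ∫ s in t0..t, g s := by
      rw [hxu.2.2.1 t ht, ← intervalIntegral.integral_const_mul, add_sub_assoc,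
        ← intervalIntegral.integral_sub (f := fun s => -(a * u s)) (g := fun s => a * g s)
          (((hxu.intervalIntegrable htT).mono_set hI).const_mul a).neg
          ((hg.mono_set hI).const_mul a)]
      simp only [y, v, mul_add, neg_add, sub_eq_add_neg]
    exact hy ▸ hstate t ht
  have hdist : ∫ t in t0..T, |(-(a * v t)) - (-(a * u t))| ≤ δ := by
    have : ∀ t, |(-(a * v t)) - (-(a * u t))| = a * |g t| := fun t => by
      rw [show -(a * v t) - -(a * u t) = -(a * g t) by simp only [v]; ring, abs_neg, abs_mul,
        abs_of_pos ha]
    simp only [this, intervalIntegral.integral_const_mul]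
    calc a * ∫ t in t0..T, |g t| ≤ a * (δ / a) := by gcongr
      _ = δ := mul_div_cancel₀ δ ha.ne'
  have hcost := FP3Cost_sub_FP3Cost htT hlam.ne' hxu hyv (by simpa [v] using hmean)
  simp only [v, add_sub_cancel_left] at hcost
  have hcoef : 0 < a / lam - 1 := sub_pos.2 ((one_lt_div hlam).2 hal)
  exact (mul_nonneg_iff_of_pos_left hcoef).1 (by linarith [hopt y v hyv hdist])

def massTransfer (F G : Set ℝ) (m : ℝ) : ℝ → ℝ :=
  G.indicator (fun _ => m / volume.real G) - F.indicator (fun _ => m / volume.real F)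

section massTransfer

variable {F G : Set ℝ} {m : ℝ} {t : ℝ}

theorem measurable_massTransfer (hF : MeasurableSet F) (hG : MeasurableSet G) :
    Measurable (massTransfer F G m) :=
  (measurable_const.indicator hG).sub (measurable_const.indicator hF)

theorem massTransfer_of_mem_left (hFG : Disjoint F G) (ht : t ∈ F) :
    massTransfer F G m t = -(m / volume.real F) := by
  simp [massTransfer, ht, Set.disjoint_left.1 hFG ht]

theorem massTransfer_of_mem_right (hFG : Disjoint F G) (ht : t ∈ G) :
    massTransfer F G m t = m / volume.real G := by
  simp [massTransfer, ht, Set.disjoint_right.1 hFG ht]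

theorem massTransfer_of_notMem (htF : t ∉ F) (htG : t ∉ G) : massTransfer F G m t = 0 := by
  simp [massTransfer, htF, htG]

theorem massTransfer_nonpos (hm : 0 ≤ m) (ht : t ∉ G) : massTransfer F G m t ≤ 0 := by
  by_cases htF : t ∈ F <;> simp [massTransfer, ht, htF]; positivity

theorem massTransfer_nonneg (hm : 0 ≤ m) (ht : t ∉ F) : 0 ≤ massTransfer F G m t := by
  by_cases htG : t ∈ G <;> simp [massTransfer, ht, htG]; positivity

theorem massTransfer_nonpos_of_le {c : ℝ} (hm : 0 ≤ m) (hGc : G ⊆ Ioi c) (ht : t ≤ c) :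
    massTransfer F G m t ≤ 0 :=
  massTransfer_nonpos hm fun htG => (hGc htG).not_ge ht

theorem massTransfer_nonneg_of_lt {c : ℝ} (hm : 0 ≤ m) (hFc : F ⊆ Iic c) (ht : c < t) :
    0 ≤ massTransfer F G m t :=
  massTransfer_nonneg hm fun htF => (hFc htF).not_gt ht

theorem intervalIntegrable_indicator_const {S : Set ℝ} (hS : MeasurableSet S) (c : ℝ)
    {p q : ℝ} :
    IntervalIntegrable (S.indicator fun _ => c) volume p q :=
  intervalIntegrable_iff.2 ((intervalIntegrable_iff.1 intervalIntegrable_const).indicator hS)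

theorem intervalIntegrable_massTransfer (hF : MeasurableSet F) (hG : MeasurableSet G)
    {p q : ℝ} :
    IntervalIntegrable (massTransfer F G m) volume p q :=
  (intervalIntegrable_indicator_const hG _).sub (intervalIntegrable_indicator_const hF _)

theorem integral_indicator_div_measureReal {S : Set ℝ} {p q : ℝ} (hpq : p ≤ q)
    (hS : MeasurableSet S) (hSpq : S ⊆ Ioc p q) (hS0 : volume.real S ≠ 0) :
    ∫ t in p..q, S.indicator (fun _ => m / volume.real S) t = m := by
  rw [intervalIntegral.integral_of_le hpq, integral_indicator_const _ hS,
    measureReal_restrict_apply hS, inter_eq_left.2 hSpq, smul_eq_mul, mul_div_cancel₀ _ hS0]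

theorem integral_massTransfer {p q : ℝ} (hpq : p ≤ q) (hF : MeasurableSet F)
    (hG : MeasurableSet G) (hFpq : F ⊆ Ioc p q) (hGpq : G ⊆ Ioc p q) (hF0 : volume.real F ≠ 0)
    (hG0 : volume.real G ≠ 0) : ∫ t in p..q, massTransfer F G m t = 0 := by
  simp only [massTransfer, Pi.sub_apply]
  rw [intervalIntegral.integral_sub (intervalIntegrable_indicator_const hG _)
    (intervalIntegrable_indicator_const hF _), integral_indicator_div_measureReal hpq hG hGpq hG0,
    integral_indicator_div_measureReal hpq hF hFpq hF0, sub_self]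

theorem integral_abs_massTransfer_le {p q : ℝ} (hpq : p ≤ q) (hm : 0 ≤ m)
    (hF : MeasurableSet F) (hG : MeasurableSet G) (hFpq : F ⊆ Ioc p q) (hGpq : G ⊆ Ioc p q)
    (hF0 : volume.real F ≠ 0) (hG0 : volume.real G ≠ 0) :
    ∫ t in p..q, |massTransfer F G m t| ≤ 2 * m := by
  have hGi := intervalIntegrable_indicator_const hG (m / volume.real G) (p := p) (q := q)
  have hFi := intervalIntegrable_indicator_const hF (m / volume.real F) (p := p) (q := q)
  calc ∫ t in p..q, |massTransfer F G m t|
      ≤ ∫ t in p..q, (G.indicator (fun _ => m / volume.real G) t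
          + F.indicator (fun _ => m / volume.real F) t) := by
        refine intervalIntegral.integral_mono_on hpq
          (intervalIntegrable_massTransfer hF hG).abs (hGi.add hFi) fun t _ => ?_
        refine (abs_sub _ _).trans (add_le_add ?_ ?_) <;>
          exact (abs_of_nonneg (indicator_nonneg (fun _ _ => by positivity) _)).le
    _ = 2 * m := by
        rw [intervalIntegral.integral_add hGi hFi,
          integral_indicator_div_measureReal hpq hG hGpq hG0,
          integral_indicator_div_measureReal hpq hF hFpq hF0]
        ring

theorem add_massTransfer_mem_Icc {U : ℝ → ℝ} {ε : ℝ} (hU : ∀ t, U t ∈ Icc (-1 : ℝ) 1)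
    (hFG : Disjoint F G) (hFU : ∀ t ∈ F, 0 < U t) (hGU : ∀ t ∈ G, U t ≤ 1 - ε) (hm : 0 ≤ m)
    (hmF : m ≤ volume.real F) (hmG : m ≤ ε * volume.real G) (hF0 : 0 < volume.real F)
    (hG0 : 0 < volume.real G) (t : ℝ) : U t + massTransfer F G m t ∈ Icc (-1 : ℝ) 1 := by
  by_cases htF : t ∈ F
  · have h1 : m / volume.real F ≤ 1 := (div_le_one hF0).2 hmF
    rw [massTransfer_of_mem_left hFG htF]
    constructor <;> linarith [hFU t htF, (hU t).2, div_nonneg hm hF0.le]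
  by_cases htG : t ∈ G
  · have hε : m / volume.real G ≤ ε := (div_le_iff₀ hG0).2 hmG
    rw [massTransfer_of_mem_right hFG htG]
    constructor <;> linarith [hGU t htG, (hU t).1, div_nonneg hm hG0.le]
  · rw [massTransfer_of_notMem htF htG, add_zero]
    exact hU t

theorem integral_exp_mul_massTransfer_neg {lam p q c : ℝ} (hlam : 0 < lam) (hm : 0 < m)
    (hpq : p ≤ q) (hF : MeasurableSet F) (hG : MeasurableSet G) (hFpq : F ⊆ Ioc p q)
    (hGpq : G ⊆ Ioc p q) (hF0 : 0 < volume.real F) (hG0 : 0 < volume.real G) (hFG : Disjoint F G)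
    (hFc : F ⊆ Iic c) (hGc : G ⊆ Ioi c) :
    ∫ t in p..q, exp (-(lam * t)) * massTransfer F G m t < 0 := by
  have hGpos : G ⊆ {t | 0 < massTransfer F G m t} ∩ Ioc p q := fun t ht =>
    ⟨show 0 < massTransfer F G m t from
      (massTransfer_of_mem_right hFG ht).symm ▸ div_pos hm hG0, hGpq ht⟩
  refine integral_exp_mul_neg_of_sign_change hlam (intervalIntegrable_massTransfer hF hG)
    (integral_massTransfer hpq hF hG hFpq hGpq hF0.ne' hG0.ne')
    (fun t => massTransfer_nonpos_of_le hm.le hGc)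
    (fun t => massTransfer_nonneg_of_lt hm.le hFc) fun h0 => hG0.ne' ?_
  rw [measureReal_def, measure_mono_null hGpos h0, ENNReal.toReal_zero]

theorem sub_mul_integral_massTransfer_mem_Icc {x : ℝ → ℝ} {a η t0 T p q c t : ℝ}
    (ha : 0 ≤ a) (hm : 0 ≤ m) (hp : t0 ≤ p) (hq : q ≤ T) (hF : MeasurableSet F)
    (hG : MeasurableSet G)
    (hFpq : F ⊆ Ioo p q) (hGpq : G ⊆ Ioo p q) (hF0 : volume.real F ≠ 0)
    (hG0 : volume.real G ≠ 0) (hFc : F ⊆ Iic c) (hGc : G ⊆ Ioi c) (hmη : a * (2 * m) ≤ η)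
    (hx : ∀ s ∈ Icc t0 T, x s ∈ Icc (-1 : ℝ) 1) (hxη : ∀ s ∈ Icc p q, x s ≤ 1 - η)
    (ht : t ∈ Icc t0 T) : x t - a * ∫ s in t0..t, massTransfer F G m s ∈ Icc (-1 : ℝ) 1 := by
  have hsub : Ioo p q ⊆ Ioc t0 T := fun s hs => ⟨hp.trans_lt hs.1, hs.2.le.trans hq⟩
  have htT : t0 ≤ T := ht.1.trans ht.2
  refine sub_mul_integral_mem_Icc_of_sign_change ha (intervalIntegrable_massTransfer hF hG)
    (integral_massTransfer htT hF hG (hFpq.trans hsub) (hGpq.trans hsub) hF0 hG0)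
    (fun s => massTransfer_nonpos_of_le hm hGc) (fun s => massTransfer_nonneg_of_lt hm hFc)
    (fun s hs => massTransfer_of_notMem (fun h => hs (hFpq h)) fun h => hs (hGpq h))
    ((mul_le_mul_of_nonneg_left (integral_abs_massTransfer_le htT hm hF hG (hFpq.trans hsub)
      (hGpq.trans hsub) hF0 hG0) ha).trans hmη) hx hxη ht

end massTransfer

namespace FP3LocalMin

variable {a lam t0 T x0 : ℝ} {x u : ℝ → ℝ}

theorem measure_control_le_inter_Ioo_eq_zero (hmin : FP3LocalMin a lam t0 T x0 x u)
    (hlam : 0 < lam) (hal : lam < a) {U : ℝ → ℝ} (hUm : Measurable U)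
    (hU : ∀ t, U t ∈ Icc (-1 : ℝ) 1) (hUu : U =ᵐ[volume.restrict (Icc t0 T)] u)
    {p c q ε η : ℝ} (hp : t0 ≤ p) (hq : q ≤ T) (hε : 0 < ε) (hη : 0 < η)
    (hxη : ∀ t ∈ Icc p q, x t ≤ 1 - η) (hF : volume ({t | 0 < U t} ∩ Ioo p c) ≠ 0) :
    volume ({t | U t ≤ 1 - ε} ∩ Ioo c q) = 0 := by
  by_contra hG
  set F := {t | 0 < U t} ∩ Ioo p c
  set G := {t | U t ≤ 1 - ε} ∩ Ioo c q
  have ha : 0 < a := hlam.trans hal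
  obtain ⟨t₁, -, hpc⟩ := nonempty_of_measure_ne_zero hF
  obtain ⟨t₂, -, hcq⟩ := nonempty_of_measure_ne_zero hG
  have hFpq : F ⊆ Ioo p q := fun t ht => ⟨ht.2.1, ht.2.2.trans (hcq.1.trans hcq.2)⟩
  have hGpq : G ⊆ Ioo p q := fun t ht => ⟨hpc.1.trans (hpc.2.trans ht.2.1), ht.2.2⟩
  have hsub : Ioo p q ⊆ Ioc t0 T := fun s hs => ⟨hp.trans_lt hs.1, hs.2.le.trans hq⟩
  have hFT := hFpq.trans hsub
  have hGT := hGpq.trans hsub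
  have htT : t0 ≤ T := by linarith [hpc.1.trans hpc.2, hcq.1.trans hcq.2]
  have hFm : MeasurableSet F := (measurableSet_lt measurable_const hUm).inter measurableSet_Ioo
  have hGm : MeasurableSet G := (measurableSet_le hUm measurable_const).inter measurableSet_Ioo
  have hF0 : 0 < volume.real F := measureReal_inter_Ioo_pos hF
  have hG0 : 0 < volume.real G := measureReal_inter_Ioo_pos hG
  have hFc : F ⊆ Iic c := fun t ht => ht.2.2.le
  have hGc : G ⊆ Ioi c := fun t ht => ht.2.1
  have hFG : Disjoint F G := Set.disjoint_left.2 fun t htF htG =>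
    (mem_Ioi.1 (hGc htG)).not_ge (mem_Iic.1 (hFc htF))
  obtain ⟨δ, hδ, hvar⟩ := hmin.exists_integral_exp_mul_nonneg hlam hal htT
  have hpos : ∀ᶠ m in 𝓝[>] (0 : ℝ), 0 < m := self_mem_nhdsWithin
  have hlt : ∀ {r : ℝ}, 0 < r → ∀ᶠ m in 𝓝[>] (0 : ℝ), m < r := fun hr =>
    nhdsWithin_le_nhds (eventually_lt_nhds hr)
  obtain ⟨m, hm, hmF, hmG, hmδ, hmη⟩ := (hpos.and <| (hlt hF0).and <|
    (hlt (mul_pos hε hG0)).and <| (hlt (half_pos hδ)).and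
      (hlt (div_pos hη (mul_pos ha two_pos)))).exists
  have hmη' : a * (2 * m) ≤ η := by
    rw [lt_div_iff₀ (mul_pos ha two_pos)] at hmη
    linarith
  have hcontrol :
      ∀ᵐ t ∂volume.restrict (Icc t0 T), u t + massTransfer F G m t ∈ Icc (-1 : ℝ) 1 := by
    filter_upwards [hUu] with t ht
    rw [← ht]
    exact add_massTransfer_mem_Icc hU hFG (fun t ht => ht.1) (fun t ht => ht.1) hm.le hmF.le
      hmG.le hF0 hG0 t
  have hstate := fun t (ht : t ∈ Icc t0 T) => sub_mul_integral_massTransfer_mem_Icc ha.le hm.le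
    hp hq hFm hGm hFpq hGpq hF0.ne' hG0.ne' hFc hGc hmη' hmin.1.2.2.2 hxη ht
  have hsmall := integral_abs_massTransfer_le htT hm.le hFm hGm hFT hGT hF0.ne' hG0.ne'
  exact (integral_exp_mul_massTransfer_neg hlam hm htT hFm hGm hFT hGT hF0 hG0 hFG hFc
    hGc).not_ge (hvar _ (measurable_massTransfer hFm hGm).aestronglyMeasurable hcontrol hstate
      (integral_massTransfer htT hFm hGm hFT hGT hF0.ne' hG0.ne') (hsmall.trans (by linarith)))

theorem control_ae_eq_one (hmin : FP3LocalMin a lam t0 T x0 x u) (hlam : 0 < lam) (hal : lam < a)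
    {τ1 τ2 : ℝ} (h1 : t0 ≤ τ1) (h2 : τ2 ≤ T) (hx1 : x τ1 = 1)
    (hlt : ∀ t ∈ Ioo τ1 τ2, x t < 1) : ∀ᵐ t ∂volume.restrict (Icc τ1 τ2), u t = 1 := by
  obtain ⟨U, hUm, hU, hUu⟩ := hmin.1.exists_measurable_control
  have hsub : Icc τ1 τ2 ⊆ Icc t0 T := Icc_subset_Icc h1 h2
  suffices hE : volume ({t | U t < 1} ∩ Ioo τ1 τ2) = 0 by
    have hU1 : ∀ᵐ t ∂volume.restrict (Ioo τ1 τ2), U t = 1 := by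
      refine (ae_restrict_iff' measurableSet_Ioo).2 (measure_mono_null (fun t ht => ?_) hE)
      simp only [mem_compl_iff, mem_ofPred_eq, Classical.not_imp] at ht
      exact ⟨lt_of_le_of_ne (hU t).2 ht.2, ht.1⟩
    rw [Measure.restrict_congr_set Ioo_ae_eq_Icc] at hU1
    filter_upwards [hU1, ae_restrict_of_ae_restrict_of_subset hsub hUu] with t h h'
    rw [← h', h]
  by_contra hE
  obtain ⟨c, q, hτ1c, hcq, hqτ2, hE'⟩ := exists_measure_inter_Ioo_ne_zero hE
  obtain ⟨ε, hε, hG⟩ := exists_measure_setOf_le_sub_ne_zero hE'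
  have hint : 0 < ∫ s in τ1..c, U s := by
    have hIcc : Icc τ1 c ⊆ Icc t0 T := (Icc_subset_Icc_right (hcq.trans hqτ2).le).trans hsub
    have := hmin.1.sub_eq_integral (hIcc (left_mem_Icc.2 hτ1c.le))
      (hIcc (right_mem_Icc.2 hτ1c.le))
    rw [hx1, ← intervalIntegral.integral_congr_ae_restrict (ae_restrict_of_ae_restrict_of_subset
      ((uIoc_subset_uIcc).trans (by rw [uIcc_of_le hτ1c.le]; exact hIcc)) hUu)] at this
    nlinarith [hlt c ⟨hτ1c, hcq.trans hqτ2⟩, hlam.trans hal]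
  obtain ⟨p, c', hτ1p, hpc', hc'c, hF⟩ :=
    exists_measure_inter_Ioo_ne_zero (measure_setOf_pos_inter_Ioo_ne_zero hτ1c.le hint)
  obtain ⟨η, hη, hxη⟩ := isCompact_Icc.exists_pos_forall_le_sub
    (hmin.1.continuousOn.mono (Icc_subset_Icc (h1.trans hτ1p.le) (hqτ2.le.trans h2)))
    fun t ht => hlt t ⟨hτ1p.trans_le ht.1, ht.2.trans_lt hqτ2⟩
  exact hG (hmin.measure_control_le_inter_Ioo_eq_zero hlam hal hUm hU hUu (h1.trans hτ1p.le)
    (hqτ2.le.trans h2) hε hη hxη fun h0 =>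
      hF (measure_mono_null (inter_subset_inter_right _ (Ioo_subset_Ioo_right hc'c.le)) h0))

end FP3LocalMin

theorem fp3_statement_S2_general
    (a lam t0 T x0 : ℝ) (hal : lam < a) (hlam : 0 < lam)
    (xb ub : ℝ → ℝ) (hmin : FP3LocalMin a lam t0 T x0 xb ub)
    (τ1 τ2 : ℝ) (h1 : t0 ≤ τ1) (h12 : τ1 < τ2) (h2 : τ2 ≤ T)
    (hin : ∀ t ∈ Ioo τ1 τ2, xb t ∈ Ioo (-1 : ℝ) 1)
    (ha1 : xb τ1 = 1) (ha2 : xb τ2 = -1) :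
    τ2 - τ1 = 2 / a ∧ ∀ t ∈ Icc τ1 τ2, xb t = 1 - a * (t - τ1) := by
  have hu := hmin.control_ae_eq_one hlam hal h1 h2 ha1 fun t ht => (hin t ht).2
  have hline : ∀ t ∈ Icc τ1 τ2, xb t = 1 - a * (t - τ1) := by
    intro t ht
    have hint : ∫ s in τ1..t, ub s = t - τ1 := by
      rw [intervalIntegral.integral_congr_ae_restrict (g := fun _ => 1),
        intervalIntegral.integral_const, smul_eq_mul, mul_one]
      rw [uIoc_of_le ht.1]
      exact ae_restrict_of_ae_restrict_of_subset
        (Ioc_subset_Icc_self.trans (Icc_subset_Icc_right ht.2)) hu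
    have := hmin.1.sub_eq_integral ⟨h1, h12.le.trans h2⟩ ⟨h1.trans ht.1, ht.2.trans h2⟩
    rw [ha1, hint] at this
    linarith
  refine ⟨?_, hline⟩
  have hτ2 := hline τ2 (right_mem_Icc.2 h12.le)
  rw [ha2] at hτ2
  rw [eq_div_iff (hlam.trans hal).ne']
  linarith

/-- If a local minimizer's trajectory stays in `(-1,1)` on `(τ1,τ2)`
and goes from `1` at `τ1` to `-1` at `τ2`, then `τ2 - τ1 = 2/a` and the trajectory
is the line `1 - a (t - τ1)` on `[τ1,τ2]`. -/
theorem fp3_statement_S2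
    (a lam t0 T x0 : ℝ) (hal : lam < a) (hlam : 0 < lam)
    (ht0 : 0 ≤ t0) (htT : t0 < T) (hx0 : x0 ∈ Icc (-1 : ℝ) 1)
    (xb ub : ℝ → ℝ) (hmin : FP3LocalMin a lam t0 T x0 xb ub)
    (τ1 τ2 : ℝ) (h1 : t0 ≤ τ1) (h12 : τ1 < τ2) (h2 : τ2 ≤ T)
    (hin : ∀ t ∈ Ioo τ1 τ2, xb t ∈ Ioo (-1 : ℝ) 1)
    (ha1 : xb τ1 = 1) (ha2 : xb τ2 = -1) :
    τ2 - τ1 = 2 / a ∧ ∀ t ∈ Icc τ1 τ2, xb t = 1 - a * (t - τ1) :=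
  fp3_statement_S2_general a lam t0 T x0 hal hlam xb ub hmin τ1 τ2 h1 h12 h2 hin ha1 ha2
end
end

section
/- Let t0 ≤ t1 < t2 ≤ T. If (x̃,ũ) and (x̌,ǔ) are feasible processes for (FP3) such that x̃(t) = 1 for all t ∈ [t1,t2], and x̌(t) = 1 − a(t − t1) for t ∈ [t1, ť] and x̌(t) = 1 + a(t − t2) for t ∈ (ť, t2], where ť := (t1+t2)/2, then J(x̌,ǔ)|_{[t1,t2]} − J(x̃,ũ)|_{[t1,t2]} = (1/λ)(a/λ − 1)·Δ(t1,t2); moreover Δ(t1,t2) > 0 and J(x̌,ǔ)|_{[t1,t2]} > J(x̃,ũ)|_{[t1,t2]}. -/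
open MeasureTheory Set

noncomputable section

/-! Since `ẋ = -a u`, integration by parts against the weight `e^{-λt}` (the state is absolutely
continuous) turns the restricted cost of any feasible process into
`(λ/a - 1) ∫ e^{-λt} x dt + [e^{-λt} x]_{t1}^{t2} / a`. Both processes equal `1` at `t1` and `t2`,
so the boundary terms cancel and the cost difference is `(1 - λ/a) ∫ e^{-λt} (x̃ - x̌) dt`, where
`x̃ - x̌` is a tent of slope `a`; its weighted integral is `a Δ / λ²`, and
`Δ = (e^{-λ t1/2} - e^{-λ t2/2})² > 0`. -/

section ExponentialWeight

variable {lam : ℝ}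

theorem hasDerivAt_exp_neg_mul (lam t : ℝ) :
    HasDerivAt (fun s => Real.exp (-(lam * s))) (-lam * Real.exp (-(lam * t))) t := by
  simpa [mul_comm] using ((hasDerivAt_id t).const_mul lam).neg.exp

theorem integral_exp_neg_mul_one_add_mul_sub (hl : lam ≠ 0) (b k c d : ℝ) :
    ∫ t in c..d, Real.exp (-(lam * t)) * (1 + b * (t - k)) =
      Real.exp (-(lam * c)) * ((1 + b * (c - k)) / lam + b / lam ^ 2) -
        Real.exp (-(lam * d)) * ((1 + b * (d - k)) / lam + b / lam ^ 2) := by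
  have hG : ∀ t, HasDerivAt
      (fun s => -(Real.exp (-(lam * s)) * ((1 + b * (s - k)) / lam + b / lam ^ 2)))
      (Real.exp (-(lam * t)) * (1 + b * (t - k))) t := by
    intro t
    have hp : HasDerivAt (fun s => (1 + b * (s - k)) / lam + b / lam ^ 2) (b / lam) t := by
      simpa using ((((hasDerivAt_id t).sub_const k).const_mul b).const_add 1).div_const lam
        |>.add_const (b / lam ^ 2)
    refine (((hasDerivAt_exp_neg_mul lam t).mul hp).neg).congr_deriv ?_
    field_simp
    ring
  rw [intervalIntegral.integral_eq_sub_of_hasDerivAt (fun t _ => hG t)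
    (Continuous.intervalIntegrable (by fun_prop) c d)]
  ring

theorem integral_exp_neg_mul_valley {a t1 t2 : ℝ} {x : ℝ → ℝ} (hl : lam ≠ 0) (h12 : t1 ≤ t2)
    (hx1 : ∀ t ∈ Icc t1 ((t1 + t2) / 2), x t = 1 - a * (t - t1))
    (hx2 : ∀ t ∈ Ioc ((t1 + t2) / 2) t2, x t = 1 + a * (t - t2)) :
    ∫ t in t1..t2, Real.exp (-(lam * t)) * x t =
      (Real.exp (-(lam * t1)) - Real.exp (-(lam * t2))) / lam -
        a * FP3Delta lam t1 t2 / lam ^ 2 := by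
  have haffine : ∀ b k c d, EqOn x (fun t => 1 + b * (t - k)) (uIcc c d) →
      IntervalIntegrable (fun t => Real.exp (-(lam * t)) * x t) volume c d ∧
      ∫ t in c..d, Real.exp (-(lam * t)) * x t =
        ∫ t in c..d, Real.exp (-(lam * t)) * (1 + b * (t - k)) := by
    intro b k c d hx
    have hEq : EqOn (fun t => Real.exp (-(lam * t)) * x t)
        (fun t => Real.exp (-(lam * t)) * (1 + b * (t - k))) (uIcc c d) := fun t ht => by
      simp only [hx ht]
    exact ⟨(intervalIntegrable_congr (hEq.mono uIoc_subset_uIcc)).2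
      (Continuous.intervalIntegrable (by fun_prop) c d), intervalIntegral.integral_congr hEq⟩
  have hm1 : t1 ≤ (t1 + t2) / 2 := by linarith
  have hm2 : (t1 + t2) / 2 ≤ t2 := by linarith
  obtain ⟨hi1, hI1⟩ := haffine (-a) t1 t1 ((t1 + t2) / 2) fun t ht => by
    rw [uIcc_of_le hm1] at ht
    simp only [hx1 t ht]
    ring
  obtain ⟨hi2, hI2⟩ := haffine a t2 ((t1 + t2) / 2) t2 fun t ht => by
    rw [uIcc_of_le hm2] at ht
    rcases ht.1.eq_or_lt with hm | hm
    · rw [← hm, hx1 _ ⟨hm1, le_rfl⟩]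
      ring
    · exact hx2 t ⟨hm, ht.2⟩
  rw [← intervalIntegral.integral_add_adjacent_intervals hi1 hi2, hI1, hI2,
    integral_exp_neg_mul_one_add_mul_sub hl, integral_exp_neg_mul_one_add_mul_sub hl, FP3Delta,
    show -(lam * ((t1 + t2) / 2)) = -(lam * (t1 + t2) / 2) by ring]
  field_simp
  ring

theorem FP3Delta_eq_sq (lam t1 t2 : ℝ) :
    FP3Delta lam t1 t2 = (Real.exp (-(lam * t1) / 2) - Real.exp (-(lam * t2) / 2)) ^ 2 := by
  simp only [FP3Delta, sub_sq, mul_assoc, ← Real.exp_add, ← Real.exp_nat_mul]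
  congr 3 <;> ring_nf

theorem FP3Delta_pos {t1 t2 : ℝ} (hl : lam ≠ 0) (h12 : t1 ≠ t2) : 0 < FP3Delta lam t1 t2 := by
  rw [FP3Delta_eq_sq]
  refine sq_pos_of_ne_zero ?_
  rw [sub_ne_zero, Ne, Real.exp_eq_exp]
  intro h
  exact h12 (mul_left_cancel₀ hl (by linarith))

end ExponentialWeight

section IntegrationByParts

variable {x w : ℝ → ℝ} {c d : ℝ}

theorem IntervalIntegrable.absolutelyContinuousOnInterval_const_add_integral
    (hw : IntervalIntegrable w volume c d) (x₀ : ℝ) :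
    AbsolutelyContinuousOnInterval (fun t => x₀ + ∫ s in c..t, w s) c d :=
  contDiffOn_const.absolutelyContinuousOnInterval.add
    (hw.absolutelyContinuousOnInterval_intervalIntegral left_mem_uIcc)

theorem continuousOn_of_eq_add_integral (hw : IntervalIntegrable w volume c d)
    (hx : ∀ t ∈ uIcc c d, x t = x c + ∫ s in c..t, w s) : ContinuousOn x (uIcc c d) :=
  (hw.absolutelyContinuousOnInterval_const_add_integral (x c)).continuousOn.congr hx

theorem integral_mul_eq_of_eq_add_integral {f : ℝ → ℝ} (hf : ContDiff ℝ 1 f)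
    (hw : IntervalIntegrable w volume c d) (hx : ∀ t ∈ uIcc c d, x t = x c + ∫ s in c..t, w s) :
    ∫ t in c..d, f t * w t = f d * x d - f c * x c - ∫ t in c..d, deriv f t * x t := by
  set y : ℝ → ℝ := fun t => x c + ∫ s in c..t, w s
  have hw_eq : ∀ᵐ t, t ∈ uIoc c d → f t * w t = f t * deriv y t := by
    filter_upwards [hw.ae_hasDerivAt_integral] with t ht htI
    rw [((ht (uIoc_subset_uIcc htI) c left_mem_uIcc).const_add (x c)).deriv]
  have hxy : EqOn x y (uIcc c d) := hx
  calc ∫ t in c..d, f t * w t = ∫ t in c..d, f t * deriv y t :=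
        intervalIntegral.integral_congr_ae hw_eq
    _ = f d * y d - f c * y c - ∫ t in c..d, deriv f t * y t :=
        hf.contDiffOn.absolutelyContinuousOnInterval.integral_mul_deriv_eq_deriv_mul
          (hw.absolutelyContinuousOnInterval_const_add_integral (x c))
    _ = f d * x d - f c * x c - ∫ t in c..d, deriv f t * x t := by
        rw [hxy left_mem_uIcc, hxy right_mem_uIcc,
          intervalIntegral.integral_congr fun t ht => congrArg (deriv f t * ·) (hxy ht)]

end IntegrationByParts

namespace FP3Feasible

variable {a t0 T x0 : ℝ} {x u : ℝ → ℝ}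

theorem integrableOn_control (h : FP3Feasible a t0 T x0 x u) : IntegrableOn u (Icc t0 T) := by
  refine Integrable.mono' (integrable_const (1 : ℝ)) h.1 ?_
  filter_upwards [h.2.1] with t ht
  exact abs_le.2 ht

theorem intervalIntegrable_control (h : FP3Feasible a t0 T x0 x u) {t1 t2 : ℝ}
    (ht1 : t1 ∈ Icc t0 T) (ht2 : t2 ∈ Icc t0 T) : IntervalIntegrable u volume t1 t2 :=
  (h.integrableOn_control.mono_set (uIcc_subset_Icc ht1 ht2)).intervalIntegrable

theorem eq_add_integral (h : FP3Feasible a t0 T x0 x u) {t1 : ℝ} (ht1 : t1 ∈ Icc t0 T) :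
    ∀ t ∈ Icc t0 T, x t = x t1 + ∫ s in t1..t, -(a * u s) := by
  have hint : ∀ t ∈ Icc t0 T, IntervalIntegrable (fun s => -(a * u s)) volume t0 t := fun t ht =>
    ((h.intervalIntegrable_control (left_mem_Icc.2 (ht.1.trans ht.2)) ht).const_mul a).neg
  intro t ht
  rw [h.2.2.1 t ht, h.2.2.1 t1 ht1, ← intervalIntegral.integral_interval_sub_left (hint t ht)
    (hint t1 ht1)]
  ring

theorem cost_eq (h : FP3Feasible a t0 T x0 x u)
    (ha : a ≠ 0) (lam : ℝ) {t1 t2 : ℝ} (h01 : t0 ≤ t1) (h12 : t1 ≤ t2) (h2T : t2 ≤ T) :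
    FP3Cost lam t1 t2 x u = (lam / a - 1) * (∫ t in t1..t2, Real.exp (-(lam * t)) * x t) +
      (Real.exp (-(lam * t2)) * x t2 - Real.exp (-(lam * t1)) * x t1) / a := by
  have ht1 : t1 ∈ Icc t0 T := ⟨h01, h12.trans h2T⟩
  have ht2 : t2 ∈ Icc t0 T := ⟨h01.trans h12, h2T⟩
  have hu := h.intervalIntegrable_control ht1 ht2
  have hw : IntervalIntegrable (fun s => -(a * u s)) volume t1 t2 := (hu.const_mul a).neg
  have hx : ∀ t ∈ uIcc t1 t2, x t = x t1 + ∫ s in t1..t, -(a * u s) := fun t ht =>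
    h.eq_add_integral ht1 t (uIcc_subset_Icc ht1 ht2 ht)
  have he : ContDiff ℝ 1 fun t => Real.exp (-(lam * t)) := by fun_prop
  have ibp := integral_mul_eq_of_eq_add_integral he hw hx
  simp only [(hasDerivAt_exp_neg_mul lam _).deriv] at ibp
  have hex : IntervalIntegrable (fun t => Real.exp (-(lam * t)) * x t) volume t1 t2 :=
    (he.continuous.continuousOn.mul (continuousOn_of_eq_add_integral hw hx)).intervalIntegrable
  have heu : IntervalIntegrable (fun t => Real.exp (-(lam * t)) * u t) volume t1 t2 :=
    hu.continuousOn_mul he.continuous.continuousOn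
  have hw_eq : ∫ t in t1..t2, Real.exp (-(lam * t)) * -(a * u t)
      = -a * ∫ t in t1..t2, Real.exp (-(lam * t)) * u t := by
    rw [← intervalIntegral.integral_const_mul]; congr 1; ext t; ring
  have hx_eq : ∫ t in t1..t2, -lam * Real.exp (-(lam * t)) * x t
      = -lam * ∫ t in t1..t2, Real.exp (-(lam * t)) * x t := by
    rw [← intervalIntegral.integral_const_mul]; congr 1; ext t; ring
  rw [hw_eq, hx_eq] at ibp
  rw [FP3Cost, intervalIntegral.integral_neg]
  simp only [mul_add]
  rw [intervalIntegral.integral_add hex heu]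
  field_simp
  linear_combination ibp

end FP3Feasible

theorem fp3_lemma_technical1_general
    (a lam t0 T x0 : ℝ) (hal : lam < a) (hlam : 0 < lam)
    (t1 t2 : ℝ) (h01 : t0 ≤ t1) (h12 : t1 < t2) (h2T : t2 ≤ T)
    (xt ut xc uc : ℝ → ℝ)
    (hft : FP3Feasible a t0 T x0 xt ut) (hfc : FP3Feasible a t0 T x0 xc uc)
    (hxt : ∀ t ∈ Icc t1 t2, xt t = 1)
    (hxc1 : ∀ t ∈ Icc t1 ((t1 + t2) / 2), xc t = 1 - a * (t - t1))
    (hxc2 : ∀ t ∈ Ioc ((t1 + t2) / 2) t2, xc t = 1 + a * (t - t2)) :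
    FP3Cost lam t1 t2 xc uc - FP3Cost lam t1 t2 xt ut
      = (1 / lam) * (a / lam - 1) * FP3Delta lam t1 t2 ∧
    0 < FP3Delta lam t1 t2 ∧
    FP3Cost lam t1 t2 xt ut < FP3Cost lam t1 t2 xc uc := by
  have ha : a ≠ 0 := (hlam.trans hal).ne'
  have hxc_t1 : xc t1 = 1 := by rw [hxc1 t1 ⟨le_rfl, by linarith⟩]; ring
  have hxc_t2 : xc t2 = 1 := by rw [hxc2 t2 ⟨by linarith, le_rfl⟩]; ring
  have hIt : ∫ t in t1..t2, Real.exp (-(lam * t)) * xt t =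
      (Real.exp (-(lam * t1)) - Real.exp (-(lam * t2))) / lam := by
    rw [intervalIntegral.integral_congr (g := fun t => Real.exp (-(lam * t)) * (1 + 0 * (t - t1)))
      fun t ht => by simp [hxt t (uIcc_of_le h12.le ▸ ht)],
      integral_exp_neg_mul_one_add_mul_sub hlam.ne']
    ring
  have hdiff : FP3Cost lam t1 t2 xc uc - FP3Cost lam t1 t2 xt ut
      = (1 / lam) * (a / lam - 1) * FP3Delta lam t1 t2 := by
    rw [hfc.cost_eq ha lam h01 h12.le h2T, hft.cost_eq ha lam h01 h12.le h2T, hIt,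
      integral_exp_neg_mul_valley hlam.ne' h12.le hxc1 hxc2, hxc_t1, hxc_t2,
      hxt t1 ⟨le_rfl, h12.le⟩, hxt t2 ⟨h12.le, le_rfl⟩]
    field_simp
    ring
  have hΔ : 0 < FP3Delta lam t1 t2 := FP3Delta_pos hlam.ne' h12.ne
  have hgain : 0 < (1 / lam) * (a / lam - 1) * FP3Delta lam t1 t2 :=
    mul_pos (mul_pos (one_div_pos.2 hlam) (sub_pos.2 ((one_lt_div hlam).2 hal))) hΔ
  exact ⟨hdiff, hΔ, by linarith⟩

/-- Lemma 3.2: comparison of the restricted costs of a process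
staying at the upper boundary `1` and of the "valley" process on `[t1,t2]`. -/
theorem fp3_lemma_technical1
    (a lam t0 T x0 : ℝ) (hal : lam < a) (hlam : 0 < lam)
    (ht0 : 0 ≤ t0) (htT : t0 < T) (hx0 : x0 ∈ Icc (-1 : ℝ) 1)
    (t1 t2 : ℝ) (h01 : t0 ≤ t1) (h12 : t1 < t2) (h2T : t2 ≤ T)
    (xt ut xc uc : ℝ → ℝ)
    (hft : FP3Feasible a t0 T x0 xt ut) (hfc : FP3Feasible a t0 T x0 xc uc)
    (hxt : ∀ t ∈ Icc t1 t2, xt t = 1)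
    (hxc1 : ∀ t ∈ Icc t1 ((t1 + t2) / 2), xc t = 1 - a * (t - t1))
    (hxc2 : ∀ t ∈ Ioc ((t1 + t2) / 2) t2, xc t = 1 + a * (t - t2)) :
    FP3Cost lam t1 t2 xc uc - FP3Cost lam t1 t2 xt ut
      = (1 / lam) * (a / lam - 1) * FP3Delta lam t1 t2 ∧
    0 < FP3Delta lam t1 t2 ∧
    FP3Cost lam t1 t2 xt ut < FP3Cost lam t1 t2 xc uc :=
  fp3_lemma_technical1_general a lam t0 T x0 hal hlam t1 t2 h01 h12 h2T xt ut xc uc hft hfc hxt hxc1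
    hxc2
end
end

section
/- Let λ > 0 and define Δ(t1,t2) := e^{−λt1} − 2e^{−λ(t1+t2)/2} + e^{−λt2} for real t1, t2. Then for any t1 < t2 and any ε̄ ∈ (0, t2 − t1), one has Δ(t1+ε̄, t2) < Δ(t1,t2) and Δ(t1,t2) > Δ(t1, t1+ε̄) + Δ(t1+ε̄, t2). -/
open MeasureTheory Set

noncomputable section

/-- Lemma 3.4: monotonicity and superadditivity properties of `Δ`. -/
theorem fp3_lemma_technical2
    (lam : ℝ) (hlam : 0 < lam) (t1 t2 ε : ℝ) (h12 : t1 < t2)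
    (hε : ε ∈ Ioo (0 : ℝ) (t2 - t1)) :
    FP3Delta lam (t1 + ε) t2 < FP3Delta lam t1 t2 ∧
    FP3Delta lam t1 (t1 + ε) + FP3Delta lam (t1 + ε) t2 < FP3Delta lam t1 t2 := by
  obtain ⟨hε0, hεlt⟩ := hε
  set e := Real.exp (-(lam * ε / 2)) with he_def
  have he0 : 0 < e := Real.exp_pos _
  have he1 : e < 1 := by
    rw [he_def]
    rw [Real.exp_lt_one_iff]
    nlinarith
  set A := Real.exp (-(lam * t1)) with hA_def
  have hA0 : 0 < A := Real.exp_pos _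
  have hm : Real.exp (-(lam * (t1 + t2) / 2)) < A * e := by
    rw [hA_def, he_def, ← Real.exp_add]
    apply Real.exp_lt_exp.2
    nlinarith
  have h1 : Real.exp (-(lam * (t1 + ε))) = A * (e * e) := by
    rw [hA_def, he_def, ← Real.exp_add, ← Real.exp_add]
    congr 1; ring
  have h2 : Real.exp (-(lam * (t1 + ε + t2) / 2))
      = Real.exp (-(lam * (t1 + t2) / 2)) * e := by
    rw [he_def, ← Real.exp_add]
    congr 1; ring
  have h3 : Real.exp (-(lam * (t1 + (t1 + ε)) / 2)) = A * e := by
    rw [hA_def, he_def, ← Real.exp_add]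
    congr 1; ring
  unfold FP3Delta
  rw [h1, h2, h3]
  have key : (1 - e) * (A * e - Real.exp (-(lam * (t1 + t2) / 2))) > 0 :=
    mul_pos (by linarith) (by linarith)
  have key2 : A * (1 - e) ^ 2 > 0 := mul_pos hA0 (by nlinarith)
  constructor
  · nlinarith [key, key2]
  · nlinarith [key, key2]
end
end

section
/- Let λ > 0 and define Δ(t1,t2) := e^{−λt1} − 2e^{−λ(t1+t2)/2} + e^{−λt2}. Let s < t be reals and let m ≥ 2 be an integer, and let s < τ1^{(2)} < τ2^{(2)} < τ1^{(3)} < τ2^{(3)} < … < τ1^{(m)} < τ2^{(m)} < t be points partitioning (s,t) by m−1 disjoint subintervals. Then Σ_{i=2}^{m} Δ(τ1^{(i)}, τ2^{(i)}) < Δ(s, t). -/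
open MeasureTheory Set

noncomputable section

/-!
With `f x = exp (-λ x / 2)` one has `Δ(t₁, t₂) = (f t₁ - f t₂)²`. Since `f` is strictly
decreasing, the increments `f τ₁⁽ⁱ⁾ - f τ₂⁽ⁱ⁾` are nonnegative and, the subintervals being
disjoint, their sum telescopes to at most `f τ₁⁽²⁾ - f τ₂⁽ᵐ⁾ < f s - f t`. A sum of squares of
nonnegative numbers is at most the square of their sum.
-/

theorem Antitone.sum_sub_le_of_interlacing {α β : Type*} [Preorder α] [AddCommGroup β]
    [PartialOrder β] [IsOrderedAddMonoid β] {f : α → β} (hf : Antitone f) {a b : ℕ → α}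
    {k n : ℕ} (hkn : k ≤ n) (hsep : ∀ i, k ≤ i → i < n → b i ≤ a (i + 1)) :
    ∑ i ∈ Finset.Icc k n, (f (a i) - f (b i)) ≤ f (a k) - f (b n) := by
  induction n, hkn using Nat.le_induction with
  | base => simp
  | succ n hkn ih =>
    rw [Finset.sum_Icc_succ_top (by omega)]
    have hprev := ih fun i hki hin => hsep i hki (by omega)
    have hgap := hf (hsep n hkn (by omega))
    calc ∑ i ∈ Finset.Icc k n, (f (a i) - f (b i)) + (f (a (n + 1)) - f (b (n + 1)))
        ≤ f (a k) - f (b n) + (f (b n) - f (b (n + 1))) := by gcongr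
      _ = f (a k) - f (b (n + 1)) := by abel

theorem fp3Delta_eq_sq (lam t₁ t₂ : ℝ) :
    FP3Delta lam t₁ t₂ = (Real.exp (-(lam * t₁) / 2) - Real.exp (-(lam * t₂) / 2)) ^ 2 := by
  have hsq : ∀ x : ℝ, Real.exp (-(lam * x)) = Real.exp (-(lam * x) / 2) ^ 2 := fun x => by
    rw [sq, ← Real.exp_add]; ring_nf
  have hmul : Real.exp (-(lam * (t₁ + t₂) / 2))
      = Real.exp (-(lam * t₁) / 2) * Real.exp (-(lam * t₂) / 2) := by
    rw [← Real.exp_add]; ring_nf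
  rw [FP3Delta, hsq t₁, hsq t₂, hmul]
  ring

theorem fp3_delta_partial_sum_general
    (lam : ℝ) (hlam : 0 < lam) (s t : ℝ)
    (m : ℕ) (hm : 2 ≤ m) (τ1 τ2 : ℕ → ℝ)
    (hs : s < τ1 2) (ht : τ2 m < t)
    (hord : ∀ i, 2 ≤ i → i ≤ m → τ1 i < τ2 i)
    (hsep : ∀ i, 2 ≤ i → i < m → τ2 i < τ1 (i + 1)) :
    ∑ i ∈ Finset.Icc 2 m, FP3Delta lam (τ1 i) (τ2 i) < FP3Delta lam s t := by
  set f : ℝ → ℝ := fun x => Real.exp (-(lam * x) / 2)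
  have hf : StrictAnti f := fun x y hxy => Real.exp_lt_exp.2 (by nlinarith)
  have hinc : ∀ i ∈ Finset.Icc 2 m, 0 ≤ f (τ1 i) - f (τ2 i) := fun i hi => by
    rw [Finset.mem_Icc] at hi
    exact sub_nonneg.2 (hf (hord i hi.1 hi.2)).le
  have htel : ∑ i ∈ Finset.Icc 2 m, (f (τ1 i) - f (τ2 i)) ≤ f (τ1 2) - f (τ2 m) :=
    hf.antitone.sum_sub_le_of_interlacing hm fun i h2i him => (hsep i h2i him).le
  have hend : f (τ1 2) - f (τ2 m) < f s - f t := sub_lt_sub (hf hs) (hf ht)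
  calc ∑ i ∈ Finset.Icc 2 m, FP3Delta lam (τ1 i) (τ2 i)
      = ∑ i ∈ Finset.Icc 2 m, (f (τ1 i) - f (τ2 i)) ^ 2 := by simp only [fp3Delta_eq_sq, f]
    _ ≤ (∑ i ∈ Finset.Icc 2 m, (f (τ1 i) - f (τ2 i))) ^ 2 :=
      Finset.sum_sq_le_sq_sum_of_nonneg hinc
    _ ≤ (f (τ1 2) - f (τ2 m)) ^ 2 := pow_le_pow_left₀ (Finset.sum_nonneg hinc) htel 2
    _ < (f s - f t) ^ 2 :=
      pow_lt_pow_left₀ hend ((Finset.sum_nonneg hinc).trans htel) two_ne_zero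
    _ = FP3Delta lam s t := (fp3Delta_eq_sq lam s t).symm

/-- finitely many ordered disjoint subintervals of `(s,t)` give a
strict inequality for the partial sums of `Δ`. -/
theorem fp3_delta_partial_sum
    (lam : ℝ) (hlam : 0 < lam) (s t : ℝ) (hst : s < t)
    (m : ℕ) (hm : 2 ≤ m) (τ1 τ2 : ℕ → ℝ)
    (hs : s < τ1 2) (ht : τ2 m < t)
    (hord : ∀ i, 2 ≤ i → i ≤ m → τ1 i < τ2 i)
    (hsep : ∀ i, 2 ≤ i → i < m → τ2 i < τ1 (i + 1)) :
    ∑ i ∈ Finset.Icc 2 m, FP3Delta lam (τ1 i) (τ2 i) < FP3Delta lam s t :=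
  fp3_delta_partial_sum_general lam hlam s t m hm τ1 τ2 hs ht hord hsep
end
end

section
/- Let λ > 0 and define Δ(t1,t2) := e^{−λt1} − 2e^{−λ(t1+t2)/2} + e^{−λt2}. Let s < t be reals and let (τ1^{(i)}, τ2^{(i)})_{i≥2} be a countable family of pairwise disjoint nonempty open intervals contained in (s,t). Then the series Σ_{i=2}^{∞} Δ(τ1^{(i)}, τ2^{(i)}) converges and Σ_{i=2}^{∞} Δ(τ1^{(i)}, τ2^{(i)}) ≤ Δ(s, t). -/
/-!
With `f r = e^{-λ r / 2}` one has `Δ(t₁, t₂) = (f t₁ - f t₂)²`. The numbers `f τ₁ⁱ - f τ₂ⁱ` are the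
masses of the disjoint intervals `(τ₁ⁱ, τ₂ⁱ)` for the Stieltjes measure of the increasing continuous
function `-f`, so they are nonnegative with sum at most `f s - f t`; hence the sum of their squares is
at most `(f s - f t)² = Δ(s, t)`.
-/

open MeasureTheory Set

noncomputable section

theorem Monotone.summable_sub_and_tsum_sub_le_of_pairwise_disjoint {ι : Type*} [Countable ι]
    {g : ℝ → ℝ} (hg : Monotone g) (hcont : Continuous g) {s t : ℝ} (hst : s ≤ t) {a b : ι → ℝ}
    (hab : ∀ i, a i ≤ b i) (hsub : ∀ i, Ioo (a i) (b i) ⊆ Ioo s t)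
    (hdisj : Pairwise (Function.onFun Disjoint fun i => Ioo (a i) (b i))) :
    Summable (fun i => g (b i) - g (a i)) ∧ ∑' i, (g (b i) - g (a i)) ≤ g t - g s := by
  let G : StieltjesFunction ℝ :=
    { toFun := g, mono' := hg, right_continuous' := fun _ => hcont.continuousWithinAt }
  have measure_Ioo_eq (x y : ℝ) : G.measure (Ioo x y) = ENNReal.ofReal (g y - g x) := by
    rw [G.measure_Ioo]
    congr 2
    exact hcont.continuousWithinAt.leftLim_eq
  have hinc : ∀ i, 0 ≤ g (b i) - g (a i) := fun i => sub_nonneg.mpr (hg (hab i))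
  have hmass : ∑' i, ENNReal.ofReal (g (b i) - g (a i)) ≤ ENNReal.ofReal (g t - g s) := by
    calc ∑' i, ENNReal.ofReal (g (b i) - g (a i)) = G.measure (⋃ i, Ioo (a i) (b i)) := by
          rw [MeasureTheory.measure_iUnion hdisj fun _ => measurableSet_Ioo]
          exact tsum_congr fun i => (measure_Ioo_eq _ _).symm
      _ ≤ G.measure (Ioo s t) := measure_mono (iUnion_subset hsub)
      _ = ENNReal.ofReal (g t - g s) := measure_Ioo_eq s t
  have hfin : ∑' i, ENNReal.ofReal (g (b i) - g (a i)) ≠ ⊤ :=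
    ne_top_of_le_ne_top ENNReal.ofReal_ne_top hmass
  have hsum : Summable (fun i => g (b i) - g (a i)) :=
    (ENNReal.summable_toReal hfin).congr fun i => ENNReal.toReal_ofReal (hinc i)
  refine ⟨hsum, ?_⟩
  rwa [← ENNReal.ofReal_le_ofReal_iff (sub_nonneg.mpr (hg hst)),
    ENNReal.ofReal_tsum_of_nonneg hinc hsum]

theorem summable_sq_and_tsum_sq_le_sq {ι : Type*} {x : ι → ℝ} {A : ℝ} (hx : ∀ i, 0 ≤ x i)
    (hsum : Summable x) (hle : ∑' i, x i ≤ A) :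
    Summable (fun i => x i ^ 2) ∧ ∑' i, x i ^ 2 ≤ A ^ 2 := by
  have hxA : ∀ i, x i ≤ A := fun i => (hsum.le_tsum i fun j _ => hx j).trans hle
  have hsq : ∀ i, x i ^ 2 ≤ A * x i := fun i => by
    rw [sq]; exact mul_le_mul_of_nonneg_right (hxA i) (hx i)
  have hsum_sq : Summable (fun i => x i ^ 2) :=
    .of_nonneg_of_le (fun i => sq_nonneg _) hsq (hsum.mul_left A)
  refine ⟨hsum_sq, ?_⟩
  calc ∑' i, x i ^ 2 ≤ ∑' i, A * x i := hsum_sq.tsum_le_tsum hsq (hsum.mul_left A)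
    _ = A * ∑' i, x i := tsum_mul_left
    _ ≤ A * A := mul_le_mul_of_nonneg_left hle ((tsum_nonneg hx).trans hle)
    _ = A ^ 2 := (sq A).symm

/-- for a countable family of pairwise disjoint nonempty open
subintervals of `(s,t)`, the series of the `Δ`-values converges and its sum is
at most `Δ(s,t)`. -/
theorem fp3_delta_series
    (lam : ℝ) (hlam : 0 < lam) (s t : ℝ) (hst : s < t)
    (τ1 τ2 : ℕ → ℝ)
    (hord : ∀ i, τ1 i < τ2 i)
    (hsub : ∀ i, Ioo (τ1 i) (τ2 i) ⊆ Ioo s t)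
    (hdisj : ∀ i j, i ≠ j → Disjoint (Ioo (τ1 i) (τ2 i)) (Ioo (τ1 j) (τ2 j))) :
    Summable (fun i => FP3Delta lam (τ1 i) (τ2 i)) ∧
    ∑' i, FP3Delta lam (τ1 i) (τ2 i) ≤ FP3Delta lam s t := by
  set g : ℝ → ℝ := fun r => -Real.exp (-(lam * r) / 2)
  have hg : Monotone g := fun x y hxy => neg_le_neg <| Real.exp_le_exp.mpr <| by nlinarith
  have hcont : Continuous g := by fun_prop
  obtain ⟨hsum, hle⟩ := hg.summable_sub_and_tsum_sub_le_of_pairwise_disjoint hcont hst.le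
    (fun i => (hord i).le) hsub hdisj
  have hinc : ∀ i, 0 ≤ g (τ2 i) - g (τ1 i) := fun i => sub_nonneg.mpr (hg (hord i).le)
  have hΔ (x y : ℝ) : FP3Delta lam x y = (g y - g x) ^ 2 := by
    rw [fp3Delta_eq_sq, neg_sub_neg]
  simp only [hΔ]
  exact summable_sq_and_tsum_sq_le_sq hinc hsum hle
end
end
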